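/- Let p ≥ 4 be an integer and 1 ≤ a ≤ p−2. For every integer L ≥ 1 and every real q with 0 < q < 1, B^p_{a,1}(L,1) = B^p_{a,1}(L−1,1) + q^{L+1−a} B^p_{a,2}(L−1,3). -/
import Mathlib


open Finset

noncomputable section

/-- `(q)_k = ∏_{j=1}^k (1 - q^j)`. -/
def qPoch (q : ℝ) (k : ℕ) : ℝ := ∏ j ∈ Finset.range k, (1 - q ^ (j + 1))

/-- The Andrews–Baxter `q`-trinomial coefficient `T^n(L,A)`. -/
def qTri (q : ℝ) (n : ℤ) (L : ℕ) (A : ℤ) : ℝ :=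
  if |A| ≤ (L : ℤ) then
    ∑ j ∈ Finset.range (L + 1),
      if 0 ≤ (j : ℤ) + A ∧ 0 ≤ (L : ℤ) - 2 * j - A then
        q ^ ((j : ℤ) * ((j : ℤ) + A - n)) * qPoch q L /
          (qPoch q j * qPoch q (((j : ℤ) + A).toNat) * qPoch q (((L : ℤ) - 2 * j - A).toNat))
      else 0
  else 0

/-- Bosonic polynomial `B^p_{a,b}(L,s)`. -/
def Bpoly (q : ℝ) (p a b s : ℤ) (L : ℕ) : ℝ :=
  ∑' j : ℤ,
    (q ^ (p * (p + 1) * j ^ 2 + j * ((p + 1) * a - p * s)) * qTri q 0 L (2 * p * j + a - b)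
      - q ^ ((p * j + a) * ((p + 1) * j + s)) * qTri q 0 L (2 * p * j + a + b))

/-- Bosonic polynomial `B̃^p_{a,b}(L,s)`. -/
def Btpoly (q : ℝ) (p a b s : ℤ) (L : ℕ) : ℝ :=
  ∑' j : ℤ,
    (q ^ (p * (p + 1) * j ^ 2 + j * ((p + 1) * a - p * s)) * qTri q 1 L (2 * p * j + a - b)
      - q ^ (p * (p + 1) * j ^ 2 + j * ((p + 1) * a + p * (s - 2)) + a * (s - 1) - b)
        * qTri q 1 L (2 * p * j + a + b))

/-- summand of the trinomial coefficient, as a function on ℤ -/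
def Tsummand (q : ℝ) (n : ℤ) (L : ℕ) (A : ℤ) (j : ℤ) : ℝ :=
  if 0 ≤ j ∧ 0 ≤ j + A ∧ 0 ≤ (L : ℤ) - 2 * j - A then
    q ^ (j * (j + A - n)) * qPoch q L /
      (qPoch q j.toNat * qPoch q ((j + A).toNat) * qPoch q (((L : ℤ) - 2 * j - A).toNat))
  else 0

lemma qPoch_pos {q : ℝ} (hq0 : 0 < q) (hq1 : q < 1) (k : ℕ) : 0 < qPoch q k := by
  apply Finset.prod_pos
  intro j _
  have : q ^ (j + 1) < 1 := pow_lt_one₀ hq0.le hq1 (Nat.succ_ne_zero j)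
  linarith

lemma qPoch_succ (q : ℝ) (k : ℕ) : qPoch q (k + 1) = qPoch q k * (1 - q ^ (k + 1)) := by
  simp [qPoch, Finset.prod_range_succ]

lemma Tsummand_eq_zero {q : ℝ} {n : ℤ} {L : ℕ} {A j : ℤ}
    (h : j < 0 ∨ (L : ℤ) < j ∨ A < -(L : ℤ) ∨ (L : ℤ) < A) : Tsummand q n L A j = 0 := by
  rw [Tsummand, if_neg]
  omega

lemma Tsummand_support {q : ℝ} {n : ℤ} {L : ℕ} {A : ℤ} :
    ∀ j ∉ Finset.Icc (0 : ℤ) (L : ℤ), Tsummand q n L A j = 0 := by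
  intro j hj
  simp only [Finset.mem_Icc, not_and_or, not_le] at hj
  exact Tsummand_eq_zero (by omega)

lemma Tsummand_summable (q : ℝ) (n : ℤ) (L : ℕ) (A : ℤ) :
    Summable (Tsummand q n L A) :=
  summable_of_ne_finset_zero Tsummand_support

lemma qTri_eq_tsum (q : ℝ) (n : ℤ) (L : ℕ) (A : ℤ) :
    qTri q n L A = ∑' j : ℤ, Tsummand q n L A j := by
  rw [tsum_eq_sum (s := Finset.Icc (0 : ℤ) (L : ℤ)) Tsummand_support]
  rw [qTri]
  by_cases hA : |A| ≤ (L : ℤ)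
  · rw [if_pos hA]
    have hmap : Finset.Icc (0 : ℤ) (L : ℤ)
        = (Finset.range (L + 1)).map ⟨((↑) : ℕ → ℤ), Nat.cast_injective⟩ := by
      ext x
      simp only [Finset.mem_Icc, Finset.mem_map, Finset.mem_range,
        Function.Embedding.coeFn_mk]
      constructor
      · rintro ⟨h0, hL2⟩
        exact ⟨x.toNat, by omega, by omega⟩
      · rintro ⟨m, hm, rfl⟩
        constructor <;> omega
    rw [hmap, Finset.sum_map]
    apply Finset.sum_congr rfl
    intro m _
    simp only [Function.Embedding.coeFn_mk, Tsummand, Int.toNat_natCast]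
    split_ifs with h1 h2 <;> first | rfl | omega
  · rw [if_neg hA]
    symm
    apply Finset.sum_eq_zero
    intro j _
    exact Tsummand_eq_zero (by rw [abs_le, not_and_or, not_le, not_le] at hA; omega)

lemma qTri_eq_zero {q : ℝ} {n : ℤ} {L : ℕ} {A : ℤ} (h : (L : ℤ) < |A|) :
    qTri q n L A = 0 := by
  rw [qTri, if_neg (by omega)]

lemma Tsummand_rec {q : ℝ} (hq0 : 0 < q) (hq1 : q < 1) (L : ℕ) (A j : ℤ) :
    Tsummand q 0 (L + 1) A j
      = Tsummand q 0 L A j + q ^ ((L : ℤ) + 1 - A) * Tsummand q 1 L (A - 1) j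
        + q ^ ((L : ℤ) + 1 + A) * Tsummand q 0 L (A + 1) (j - 1) := by
  have hqne : q ≠ 0 := ne_of_gt hq0
  by_cases hg : 0 ≤ j ∧ 0 ≤ j + A ∧ 0 ≤ ((L : ℤ) + 1) - 2 * j - A
  · -- main case
    obtain ⟨hj, hjA, hW0⟩ := hg
    obtain ⟨U, hU⟩ : ∃ U : ℕ, (U : ℤ) = j := ⟨j.toNat, Int.toNat_of_nonneg hj⟩
    obtain ⟨V, hV⟩ : ∃ V : ℕ, (V : ℤ) = j + A := ⟨(j + A).toNat, Int.toNat_of_nonneg hjA⟩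
    obtain ⟨W, hW⟩ : ∃ W : ℕ, (W : ℤ) = (L : ℤ) + 1 - 2 * j - A :=
      ⟨((L : ℤ) + 1 - 2 * j - A).toNat, Int.toNat_of_nonneg hW0⟩
    have hUVW : U + V + W = L + 1 := by omega
    have hPU := qPoch_pos hq0 hq1 U
    have hPV := qPoch_pos hq0 hq1 V
    have hPW := qPoch_pos hq0 hq1 W
    have hPL := qPoch_pos hq0 hq1 L
    set base : ℝ := q ^ (j * (j + A - 0)) * qPoch q L / (qPoch q U * qPoch q V * qPoch q W)
      with hbase
    have hLHS : Tsummand q 0 (L + 1) A j = (1 - q ^ U * q ^ V * q ^ W) * base := by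
      rw [Tsummand, if_pos (by push_cast; omega)]
      have e1 : j.toNat = U := by omega
      have e2 : (j + A).toNat = V := by omega
      have e3 : ((((L : ℕ) + 1 : ℕ) : ℤ) - 2 * j - A).toNat = W := by push_cast; omega
      rw [e1, e2, show ((((L : ℕ) + 1 : ℕ) : ℤ) - 2 * j - A) = ((L : ℤ) + 1 - 2 * j - A) by
        push_cast; ring] at *
      rw [show (((L : ℤ) + 1 - 2 * j - A)).toNat = W by omega]
      rw [qPoch_succ, hbase]
      rw [show q ^ U * q ^ V * q ^ W = q ^ (L + 1) by rw [← pow_add, ← pow_add, hUVW]]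
      field_simp
    have h1 : Tsummand q 0 L A j = (1 - q ^ W) * base := by
      rcases Nat.eq_zero_or_pos W with hWz | hWpos
      · rw [Tsummand, if_neg (by omega)]
        rw [hWz, pow_zero]
        ring
      · obtain ⟨W', rfl⟩ : ∃ W', W = W' + 1 := ⟨W - 1, by omega⟩
        rw [Tsummand, if_pos (by omega)]
        rw [show j.toNat = U by omega, show (j + A).toNat = V by omega,
          show ((L : ℤ) - 2 * j - A).toNat = W' by omega]
        rw [hbase, qPoch_succ q W']
        have hc : (0:ℝ) < 1 - q ^ (W' + 1) := by
          have : q ^ (W' + 1) < 1 := pow_lt_one₀ hq0.le hq1 (by omega)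
          linarith
        have hPW' := qPoch_pos hq0 hq1 W'
        have hd1 : qPoch q U * qPoch q V * qPoch q W' ≠ 0 := by positivity
        have hd2 : qPoch q U * qPoch q V * (qPoch q W' * (1 - q ^ (W' + 1))) ≠ 0 := by
          have := hc
          positivity
        rw [← mul_div_assoc, div_eq_div_iff hd1 hd2]
        ring
    have h2 : q ^ ((L : ℤ) + 1 - A) * Tsummand q 1 L (A - 1) j
        = q ^ W * (1 - q ^ V) * base := by
      rcases Nat.eq_zero_or_pos V with hVz | hVpos
      · rw [Tsummand, if_neg (by omega)]
        rw [hVz, pow_zero]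
        ring
      · obtain ⟨V', rfl⟩ : ∃ V', V = V' + 1 := ⟨V - 1, by omega⟩
        rw [Tsummand, if_pos (by omega)]
        rw [show j.toNat = U by omega, show (j + (A - 1)).toNat = V' by omega,
          show ((L : ℤ) - 2 * j - (A - 1)).toNat = W by omega]
        rw [hbase, qPoch_succ q V']
        have hc : (0:ℝ) < 1 - q ^ (V' + 1) := by
          have : q ^ (V' + 1) < 1 := pow_lt_one₀ hq0.le hq1 (by omega)
          linarith
        rw [show q ^ ((L : ℤ) + 1 - A) * (q ^ (j * (j + (A - 1) - 1)) * qPoch q L /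
              (qPoch q U * qPoch q V' * qPoch q W))
            = (q ^ ((L : ℤ) + 1 - A) * q ^ (j * (j + (A - 1) - 1))) * qPoch q L /
              (qPoch q U * qPoch q V' * qPoch q W) by ring]
        rw [← zpow_add₀ hqne]
        rw [show ((L : ℤ) + 1 - A) + (j * (j + (A - 1) - 1)) = (j * (j + A - 0)) + (W : ℤ) by
          rw [hW]; ring]
        rw [zpow_add₀ hqne, zpow_natCast]
        have hPV' := qPoch_pos hq0 hq1 V'
        have hd1 : qPoch q U * qPoch q V' * qPoch q W ≠ 0 := by positivity
        have hd2 : qPoch q U * (qPoch q V' * (1 - q ^ (V' + 1))) * qPoch q W ≠ 0 := by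
          have := hc
          positivity
        rw [← mul_div_assoc, div_eq_div_iff hd1 hd2]
        ring
    have h3 : q ^ ((L : ℤ) + 1 + A) * Tsummand q 0 L (A + 1) (j - 1)
        = q ^ W * q ^ V * (1 - q ^ U) * base := by
      rcases Nat.eq_zero_or_pos U with hUz | hUpos
      · rw [Tsummand, if_neg (by omega)]
        rw [hUz, pow_zero]
        ring
      · obtain ⟨U', rfl⟩ : ∃ U', U = U' + 1 := ⟨U - 1, by omega⟩
        rw [Tsummand, if_pos (by omega)]
        rw [show (j - 1).toNat = U' by omega, show ((j - 1) + (A + 1)).toNat = V by omega,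
          show ((L : ℤ) - 2 * (j - 1) - (A + 1)).toNat = W by omega]
        rw [hbase, qPoch_succ q U']
        have hc : (0:ℝ) < 1 - q ^ (U' + 1) := by
          have : q ^ (U' + 1) < 1 := pow_lt_one₀ hq0.le hq1 (by omega)
          linarith
        rw [show q ^ ((L : ℤ) + 1 + A) * (q ^ ((j - 1) * ((j - 1) + (A + 1) - 0)) * qPoch q L /
              (qPoch q U' * qPoch q V * qPoch q W))
            = (q ^ ((L : ℤ) + 1 + A) * q ^ ((j - 1) * ((j - 1) + (A + 1) - 0))) * qPoch q L /
              (qPoch q U' * qPoch q V * qPoch q W) by ring]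
        rw [← zpow_add₀ hqne]
        rw [show ((L : ℤ) + 1 + A) + ((j - 1) * ((j - 1) + (A + 1) - 0))
            = (j * (j + A - 0)) + ((W : ℤ) + (V : ℤ)) by rw [hW, hV]; ring]
        rw [zpow_add₀ hqne, zpow_add₀ hqne, zpow_natCast, zpow_natCast]
        have hPU' := qPoch_pos hq0 hq1 U'
        have hd1 : qPoch q U' * qPoch q V * qPoch q W ≠ 0 := by positivity
        have hd2 : qPoch q U' * (1 - q ^ (U' + 1)) * qPoch q V * qPoch q W ≠ 0 := by
          have := hc
          positivity
        rw [← mul_div_assoc, div_eq_div_iff hd1 hd2]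
        ring
    rw [hLHS, h1, h2, h3]
    ring
  · -- guard fails: everything is zero
    rw [Tsummand, if_neg (by push_cast; omega), Tsummand, if_neg (by omega),
      Tsummand, if_neg (by omega), Tsummand, if_neg (by omega)]
    ring

lemma Tsummand_diff {q : ℝ} (hq0 : 0 < q) (hq1 : q < 1) (M : ℕ) (B j : ℤ) :
    Tsummand q 0 M B j - Tsummand q 1 M B j
      = q ^ (2 * B + 2) * Tsummand q 0 M (B + 2) (j - 1)
        - q ^ B * Tsummand q 1 M (B + 2) (j - 1) := by
  have hqne : q ≠ 0 := ne_of_gt hq0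
  by_cases hG : 0 ≤ j ∧ 0 ≤ j + B ∧ 0 ≤ (M : ℤ) - 2 * j - B
  · by_cases hG' : 0 ≤ j - 1 ∧ 0 ≤ (j - 1) + (B + 2) ∧ 0 ≤ (M : ℤ) - 2 * (j - 1) - (B + 2)
    · -- main case: j ≥ 1
      obtain ⟨hj, hjB, hW0⟩ := hG
      obtain ⟨U', hU⟩ : ∃ U' : ℕ, (U' : ℤ) = j - 1 := ⟨(j - 1).toNat, by omega⟩
      obtain ⟨V, hV⟩ : ∃ V : ℕ, (V : ℤ) = j + B := ⟨(j + B).toNat, by omega⟩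
      obtain ⟨W, hW⟩ : ∃ W : ℕ, (W : ℤ) = (M : ℤ) - 2 * j - B := ⟨((M : ℤ) - 2 * j - B).toNat, by omega⟩
      have hPU' := qPoch_pos hq0 hq1 U'
      have hPV := qPoch_pos hq0 hq1 V
      have hPW := qPoch_pos hq0 hq1 W
      have hPM := qPoch_pos hq0 hq1 M
      have hcU : (0:ℝ) < 1 - q ^ (U' + 1) := by
        have : q ^ (U' + 1) < 1 := pow_lt_one₀ hq0.le hq1 (by omega)
        linarith
      have hcV : (0:ℝ) < 1 - q ^ (V + 1) := by
        have : q ^ (V + 1) < 1 := pow_lt_one₀ hq0.le hq1 (by omega)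
        linarith
      rw [Tsummand, if_pos ⟨hj, hjB, hW0⟩, Tsummand, if_pos ⟨hj, hjB, hW0⟩,
        Tsummand, if_pos (by omega), Tsummand, if_pos (by omega)]
      rw [show j.toNat = U' + 1 by omega, show (j + B).toNat = V by omega,
        show ((M : ℤ) - 2 * j - B).toNat = W by omega,
        show (j - 1).toNat = U' by omega, show ((j - 1) + (B + 2)).toNat = V + 1 by omega,
        show ((M : ℤ) - 2 * (j - 1) - (B + 2)).toNat = W by omega]
      rw [qPoch_succ q U', qPoch_succ q V]
      -- rewrite all exponents relative to e0 = j*(j+B-1)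
      rw [show j * (j + B - 0) = j * (j + B - 1) + ((U' : ℤ) + 1) by rw [hU]; ring]
      rw [zpow_add₀ hqne]
      rw [← mul_div_assoc (q ^ (2 * B + 2)), ← mul_div_assoc (q ^ B)]
      rw [show q ^ (2 * B + 2) * (q ^ ((j - 1) * (j - 1 + (B + 2) - 0)) * qPoch q M)
          = q ^ (2 * B + 2 + (j - 1) * (j - 1 + (B + 2) - 0)) * qPoch q M from by
        rw [← mul_assoc, ← zpow_add₀ hqne]]
      rw [show q ^ B * (q ^ ((j - 1) * (j - 1 + (B + 2) - 1)) * qPoch q M)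
          = q ^ (B + (j - 1) * (j - 1 + (B + 2) - 1)) * qPoch q M from by
        rw [← mul_assoc, ← zpow_add₀ hqne]]
      rw [show 2 * B + 2 + (j - 1) * (j - 1 + (B + 2) - 0)
          = j * (j + B - 1) + ((V : ℤ) + 1) by rw [hV]; ring]
      rw [show B + (j - 1) * (j - 1 + (B + 2) - 1) = j * (j + B - 1) by ring]
      rw [zpow_add₀ hqne (j * (j + B - 1))]
      rw [show ((U' : ℤ) + 1) = ((U' + 1 : ℕ) : ℤ) by push_cast; ring,
        show ((V : ℤ) + 1) = ((V + 1 : ℕ) : ℤ) by push_cast; ring,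
        zpow_natCast, zpow_natCast]
      have hd1 : qPoch q U' * (1 - q ^ (U' + 1)) * qPoch q V * qPoch q W ≠ 0 := by
        have := hcU; positivity
      have hd2 : qPoch q U' * (qPoch q V * (1 - q ^ (V + 1))) * qPoch q W ≠ 0 := by
        have := hcV; positivity
      have hd3 : qPoch q U' * qPoch q V * qPoch q W ≠ 0 := by positivity
      rw [div_sub_div_same, div_sub_div_same, div_eq_div_iff hd1 hd2]
      ring
    · -- j = 0
      have hj0 : j = 0 := by omega
      subst hj0
      rw [Tsummand, if_pos (by omega), Tsummand, if_pos (by omega),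
        Tsummand, if_neg (by omega), Tsummand, if_neg (by omega)]
      norm_num
  · by_cases hG' : 0 ≤ j - 1 ∧ 0 ≤ (j - 1) + (B + 2) ∧ 0 ≤ (M : ℤ) - 2 * (j - 1) - (B + 2)
    · -- j + B = -1
      have hjB : j = -1 - B := by omega
      subst hjB
      rw [Tsummand, if_neg (by omega), Tsummand, if_neg (by omega),
        Tsummand, if_pos (by omega), Tsummand, if_pos (by omega)]
      rw [← mul_div_assoc (q ^ (2 * B + 2)), ← mul_div_assoc (q ^ B)]
      rw [show q ^ (2 * B + 2) * (q ^ ((-1 - B - 1) * (-1 - B - 1 + (B + 2) - 0)) * qPoch q M)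
          = q ^ (2 * B + 2 + (-1 - B - 1) * (-1 - B - 1 + (B + 2) - 0)) * qPoch q M from by
        rw [← mul_assoc, ← zpow_add₀ hqne]]
      rw [show q ^ B * (q ^ ((-1 - B - 1) * (-1 - B - 1 + (B + 2) - 1)) * qPoch q M)
          = q ^ (B + (-1 - B - 1) * (-1 - B - 1 + (B + 2) - 1)) * qPoch q M from by
        rw [← mul_assoc, ← zpow_add₀ hqne]]
      rw [show 2 * B + 2 + (-1 - B - 1) * (-1 - B - 1 + (B + 2) - 0)
          = B + (-1 - B - 1) * (-1 - B - 1 + (B + 2) - 1) by ring]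
      ring
    · rw [Tsummand, if_neg (by omega), Tsummand, if_neg (by omega),
        Tsummand, if_neg (by omega), Tsummand, if_neg (by omega)]
      ring

lemma Tsummand_shift_summable (q : ℝ) (n : ℤ) (L : ℕ) (A : ℤ) :
    Summable (fun j : ℤ => Tsummand q n L A (j - 1)) := by
  apply summable_of_ne_finset_zero (s := Finset.Icc (1 : ℤ) ((L : ℤ) + 1))
  intro j hj
  simp only [Finset.mem_Icc, not_and_or, not_le] at hj
  exact Tsummand_eq_zero (by omega)

lemma tsum_shift (q : ℝ) (n : ℤ) (L : ℕ) (A : ℤ) :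
    ∑' j : ℤ, Tsummand q n L A (j - 1) = ∑' j : ℤ, Tsummand q n L A j := by
  simpa using (Equiv.subRight (1 : ℤ)).tsum_eq (Tsummand q n L A)

lemma qTri_rec {q : ℝ} (hq0 : 0 < q) (hq1 : q < 1) (L : ℕ) (A : ℤ) :
    qTri q 0 (L + 1) A
      = qTri q 0 L A + q ^ ((L : ℤ) + 1 - A) * qTri q 1 L (A - 1)
        + q ^ ((L : ℤ) + 1 + A) * qTri q 0 L (A + 1) := by
  rw [qTri_eq_tsum, qTri_eq_tsum, qTri_eq_tsum, qTri_eq_tsum]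
  rw [tsum_congr (Tsummand_rec hq0 hq1 L A)]
  rw [Summable.tsum_add (((Tsummand_summable q 0 L A).add
      ((Tsummand_summable q 1 L (A - 1)).mul_left _)))
      ((Tsummand_shift_summable q 0 L (A + 1)).mul_left _),
    Summable.tsum_add (Tsummand_summable q 0 L A) ((Tsummand_summable q 1 L (A - 1)).mul_left _),
    tsum_mul_left, tsum_mul_left, tsum_shift]

lemma qTri_diff {q : ℝ} (hq0 : 0 < q) (hq1 : q < 1) (M : ℕ) (B : ℤ) :
    qTri q 0 M B - qTri q 1 M B
      = q ^ (2 * B + 2) * qTri q 0 M (B + 2) - q ^ B * qTri q 1 M (B + 2) := by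
  rw [qTri_eq_tsum, qTri_eq_tsum, qTri_eq_tsum, qTri_eq_tsum]
  rw [← Summable.tsum_sub (Tsummand_summable q 0 M B) (Tsummand_summable q 1 M B)]
  rw [tsum_congr (Tsummand_diff hq0 hq1 M B)]
  rw [Summable.tsum_sub ((Tsummand_shift_summable q 0 M (B + 2)).mul_left _)
      ((Tsummand_shift_summable q 1 M (B + 2)).mul_left _),
    tsum_mul_left, tsum_mul_left, tsum_shift, tsum_shift]

lemma qTri_big_arg {p : ℤ} (hp : 4 ≤ p) (a : ℤ) {M : ℤ} (hM : 0 ≤ M) {j : ℤ} (c : ℤ) (hc : |c| ≤ 2)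
    (hj : M + |a| + 3 < |j|) : M < |2 * p * j + a + c| := by
  have h8 : 8 * |j| ≤ 2 * p * |j| := by nlinarith [abs_nonneg j]
  have habs : |2 * p * j| = 2 * p * |j| := by
    rw [abs_mul, abs_of_nonneg (by linarith : (0:ℤ) ≤ 2 * p)]
  have tri : |2 * p * j| ≤ |2 * p * j + (a + c)| + |a + c| := by
    have h := abs_add_le (2 * p * j + (a + c)) (-(a + c))
    rw [abs_neg] at h
    rw [show 2 * p * j + (a + c) + -(a + c) = 2 * p * j by ring] at h
    exact h
  have hac : |a + c| ≤ |a| + 2 := le_trans (abs_add_le a c) (by linarith)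
  have : 2 * p * j + a + c = 2 * p * j + (a + c) := by ring
  rw [this]
  have habsj : 0 ≤ |j| := abs_nonneg j
  linarith

lemma Bsummand_summable (q : ℝ) {p : ℤ} (a b s : ℤ) (hp : 4 ≤ p) (hb : |b| ≤ 2) (M : ℕ) :
    Summable (fun j : ℤ =>
      q ^ (p * (p + 1) * j ^ 2 + j * ((p + 1) * a - p * s)) * qTri q 0 M (2 * p * j + a - b)
        - q ^ ((p * j + a) * ((p + 1) * j + s)) * qTri q 0 M (2 * p * j + a + b)) := by
  apply summable_of_ne_finset_zero (s := Finset.Icc (-((M : ℤ) + |a| + 4)) ((M : ℤ) + |a| + 4))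
  intro j hj
  simp only [Finset.mem_Icc, not_and_or, not_le] at hj
  have hjbig : (M : ℤ) + |a| + 3 < |j| := by
    have h0a := abs_nonneg a
    have hcj := abs_choice j
    have h0j := abs_nonneg j
    omega
  have h1 : qTri q 0 M (2 * p * j + a - b) = 0 := by
    apply qTri_eq_zero
    have := qTri_big_arg hp a (by positivity : (0:ℤ) ≤ (M:ℤ)) (-b) (by rw [abs_neg]; exact hb) hjbig
    rw [show 2 * p * j + a + -b = 2 * p * j + a - b by ring] at this
    exact this
  have h2 : qTri q 0 M (2 * p * j + a + b) = 0 := by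
    apply qTri_eq_zero
    exact qTri_big_arg hp a (by positivity : (0:ℤ) ≤ (M:ℤ)) b hb hjbig
  rw [h1, h2, mul_zero, mul_zero, sub_zero]


/-- For integers `p ≥ 4`, `1 ≤ a ≤ p-2`, every `L ≥ 1` and `0 < q < 1`:
`B^p_{a,1}(L,1) = B^p_{a,1}(L-1,1) + q^{L+1-a} B^p_{a,2}(L-1,3)`. -/
theorem Bpoly_recurrence_a1_s1 (p a : ℤ) (hp : 4 ≤ p) (ha1 : 1 ≤ a) (ha2 : a ≤ p - 2)
    (L : ℕ) (hL : 1 ≤ L) (q : ℝ) (hq0 : 0 < q) (hq1 : q < 1) :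
    Bpoly q p a 1 1 L
      = Bpoly q p a 1 1 (L - 1) + q ^ ((L : ℤ) + 1 - a) * Bpoly q p a 2 3 (L - 1) := by
  have hqne : q ≠ 0 := ne_of_gt hq0
  obtain ⟨M, rfl⟩ : ∃ M, L = M + 1 := ⟨L - 1, by omega⟩
  simp only [Nat.add_sub_cancel]
  have key : ∀ j : ℤ,
      q ^ (p * (p + 1) * j ^ 2 + j * ((p + 1) * a - p * 1)) * qTri q 0 (M + 1) (2 * p * j + a - 1)
        - q ^ ((p * j + a) * ((p + 1) * j + 1)) * qTri q 0 (M + 1) (2 * p * j + a + 1)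
      = (q ^ (p * (p + 1) * j ^ 2 + j * ((p + 1) * a - p * 1)) * qTri q 0 M (2 * p * j + a - 1)
          - q ^ ((p * j + a) * ((p + 1) * j + 1)) * qTri q 0 M (2 * p * j + a + 1))
        + q ^ (((M + 1 : ℕ) : ℤ) + 1 - a)
          * (q ^ (p * (p + 1) * j ^ 2 + j * ((p + 1) * a - p * 3)) * qTri q 0 M (2 * p * j + a - 2)
            - q ^ ((p * j + a) * ((p + 1) * j + 3)) * qTri q 0 M (2 * p * j + a + 2)) := by
    intro j
    have h₁ := qTri_rec hq0 hq1 M (2 * p * j + a - 1)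
    have h₂ := qTri_rec hq0 hq1 M (2 * p * j + a + 1)
    have h₃ := qTri_diff hq0 hq1 M (2 * p * j + a - 2)
    rw [show 2 * p * j + a - 1 - 1 = 2 * p * j + a - 2 by ring,
        show 2 * p * j + a - 1 + 1 = 2 * p * j + a by ring] at h₁
    rw [show 2 * p * j + a + 1 - 1 = 2 * p * j + a by ring,
        show 2 * p * j + a + 1 + 1 = 2 * p * j + a + 2 by ring] at h₂
    rw [show 2 * p * j + a - 2 + 2 = 2 * p * j + a by ring] at h₃
    have h₃' : qTri q 0 M (2 * p * j + a - 2)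
        = qTri q 1 M (2 * p * j + a - 2)
          + (q ^ (2 * (2 * p * j + a - 2) + 2) * qTri q 0 M (2 * p * j + a)
            - q ^ (2 * p * j + a - 2) * qTri q 1 M (2 * p * j + a)) := by linarith
    rw [h₁, h₂, h₃']
    have k1 : q ^ (p * (p + 1) * j ^ 2 + j * ((p + 1) * a - p * 1))
          * q ^ ((M : ℤ) + 1 - (2 * p * j + a - 1))
        = q ^ (((M + 1 : ℕ) : ℤ) + 1 - a)
          * q ^ (p * (p + 1) * j ^ 2 + j * ((p + 1) * a - p * 3)) := by
      rw [← zpow_add₀ hqne, ← zpow_add₀ hqne]; congr 1; push_cast; ring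
    have k2 : q ^ ((p * j + a) * ((p + 1) * j + 1)) * q ^ ((M : ℤ) + 1 + (2 * p * j + a + 1))
        = q ^ (((M + 1 : ℕ) : ℤ) + 1 - a) * q ^ ((p * j + a) * ((p + 1) * j + 3)) := by
      rw [← zpow_add₀ hqne, ← zpow_add₀ hqne]; congr 1; push_cast; ring
    have k3 : q ^ (((M + 1 : ℕ) : ℤ) + 1 - a)
          * q ^ (p * (p + 1) * j ^ 2 + j * ((p + 1) * a - p * 3)) * q ^ (2 * p * j + a - 2)
        = q ^ ((p * j + a) * ((p + 1) * j + 1)) * q ^ ((M : ℤ) + 1 - (2 * p * j + a + 1)) := by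
      rw [← zpow_add₀ hqne, ← zpow_add₀ hqne, ← zpow_add₀ hqne]; congr 1; push_cast; ring
    have k4 : q ^ (((M + 1 : ℕ) : ℤ) + 1 - a)
          * q ^ (p * (p + 1) * j ^ 2 + j * ((p + 1) * a - p * 3))
          * q ^ (2 * (2 * p * j + a - 2) + 2)
        = q ^ (p * (p + 1) * j ^ 2 + j * ((p + 1) * a - p * 1))
          * q ^ ((M : ℤ) + 1 + (2 * p * j + a - 1)) := by
      rw [← zpow_add₀ hqne, ← zpow_add₀ hqne, ← zpow_add₀ hqne]; congr 1; push_cast; ring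
    linear_combination (qTri q 1 M (2 * p * j + a - 2)) * k1
      - (qTri q 0 M (2 * p * j + a + 2)) * k2
      + (qTri q 1 M (2 * p * j + a)) * k3
      - (qTri q 0 M (2 * p * j + a)) * k4
  rw [Bpoly, Bpoly, Bpoly]
  rw [tsum_congr key]
  rw [Summable.tsum_add (Bsummand_summable q a 1 1 hp (by norm_num) M)
    ((Bsummand_summable q a 2 3 hp (by norm_num) M).mul_left _)]
  rw [tsum_mul_left]
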